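/- arXiv:1612.05976 — 8 statements merged into one kernel-verified Lean document; each statement's English description precedes it below -/
import Mathlib

section
/- Let R be a quasi-local commutative ring with maximal ideal 𝔪 consisting of nilpotent elements, such that R/𝔪 ≅ F is a field. Let f ∈ R[t] have at least one unit coefficient, and let n be the largest degree at which f has a unit coefficient. If f is not a unit in R[t], then in any factorization f = f₁·f₂·⋯·f_m of f into nonunits of R[t], one has m ≤ n. -/
theorem factorization_length_bound (R : Type*) [CommRing R] [IsLocalRing R]
    (h𝔪 : ∀ a ∈ IsLocalRing.maximalIdeal R, IsNilpotent a)
    (f : Polynomial R) (n : ℕ)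
    (hn : IsUnit (f.coeff n)) (hmax : ∀ i, IsUnit (f.coeff i) → i ≤ n)
    (hf : ¬IsUnit f)
    (m : ℕ) (g : Fin m → Polynomial R)
    (hg : ∀ i, ¬IsUnit (g i)) (hfac : f = ∏ i, g i) :
    m ≤ n := by
  classical
  set q : R →+* IsLocalRing.ResidueField R := IsLocalRing.residue R with hq
  -- the reduction of f
  set fbar : Polynomial (IsLocalRing.ResidueField R) := f.map q with hfbar
  have hmem : ∀ a : R, ¬ IsUnit a → q a = 0 := by
    intro a ha
    exact Ideal.Quotient.eq_zero_iff_mem.mpr (IsLocalRing.mem_maximalIdeal a |>.mpr ha)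
  have hfbar_deg : fbar.natDegree ≤ n := by
    apply Polynomial.natDegree_le_iff_coeff_eq_zero.mpr
    intro i hi
    rw [hfbar, Polynomial.coeff_map]
    exact hmem _ (fun hu => absurd (hmax i hu) (Nat.not_le.mpr hi))
  have hfbar_ne : fbar ≠ 0 := by
    intro h0
    have : q (f.coeff n) = 0 := by
      rw [← Polynomial.coeff_map, ← hfbar, h0, Polynomial.coeff_zero]
    exact (hn.map q).ne_zero this
  have hfacbar : fbar = ∏ i, (g i).map q := by
    rw [hfbar, hfac, Polynomial.map_prod]
  have hgne : ∀ i : Fin m, (g i).map q ≠ 0 := by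
    intro i hi0
    apply hfbar_ne
    rw [hfacbar]
    exact Finset.prod_eq_zero (Finset.mem_univ i) hi0
  have hgdeg : ∀ i : Fin m, 1 ≤ ((g i).map q).natDegree := by
    intro i
    by_contra h
    have hd : ((g i).map q).natDegree = 0 := by omega
    obtain ⟨a, ha⟩ := Polynomial.natDegree_eq_zero.mp hd
    have ha0 : a ≠ 0 := by
      intro h0; apply hgne i; rw [← ha, h0, map_zero]
    -- constant coeff of g i is a unit, higher coeffs are nilpotent
    apply hg i
    rw [Polynomial.isUnit_iff_coeff_isUnit_isNilpotent]
    constructor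
    · by_contra hu
      have : q ((g i).coeff 0) = 0 := hmem _ hu
      rw [← Polynomial.coeff_map, ← ha] at this
      simp at this
      exact ha0 this
    · intro j hj
      apply h𝔪
      apply IsLocalRing.mem_maximalIdeal _ |>.mpr
      intro hu
      have : q ((g i).coeff j) ≠ 0 := by
        intro h0
        exact (hu.map q).ne_zero h0
      rw [← Polynomial.coeff_map, ← ha] at this
      simp [Polynomial.coeff_C, hj] at this
  have hsum : fbar.natDegree = ∑ i, ((g i).map q).natDegree := by
    rw [hfacbar]
    exact Polynomial.natDegree_prod _ _ (fun i _ => hgne i)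
  calc m = ∑ _i : Fin m, 1 := by simp
    _ ≤ ∑ i, ((g i).map q).natDegree := Finset.sum_le_sum fun i _ => hgdeg i
    _ = fbar.natDegree := hsum.symm
    _ ≤ n := hfbar_deg
end

section
/- Let R be a quasi-local commutative ring with maximal ideal 𝔪 consisting of nilpotents. If f ∈ R[t] and the image f̄ of f in (R/𝔪)[t] is irreducible (equivalently, in any factorization f = g·h, one of ḡ, h̄ is a nonzero constant), then f is a strong atom of R[t]: in any factorization f = g·h in R[t], either g or h is a unit of R[t]. -/
open Polynomial IsLocalRing

private lemma unit_lift (R : Type*) [CommRing R] [IsLocalRing R]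
    (h𝔪 : ∀ a ∈ IsLocalRing.maximalIdeal R, IsNilpotent a)
    (g : Polynomial R)
    (hg : IsUnit (g.map (Ideal.Quotient.mk (IsLocalRing.maximalIdeal R)))) : IsUnit g := by
  set φ := Ideal.Quotient.mk (IsLocalRing.maximalIdeal R)
  obtain ⟨u, hu⟩ := hg
  obtain ⟨c, hc⟩ := Polynomial.map_surjective φ Ideal.Quotient.mk_surjective (↑u⁻¹ : _)
  have h1 : (g * c - 1).map φ = 0 := by
    rw [Polynomial.map_sub, Polynomial.map_mul, hc, ← hu, Polynomial.map_one, Units.mul_inv,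
      sub_self]
  have hnil : IsNilpotent (g * c - 1) := by
    rw [Polynomial.isNilpotent_iff]
    intro i
    apply h𝔪
    rw [← Ideal.Quotient.eq_zero_iff_mem, ← Polynomial.coeff_map, h1, Polynomial.coeff_zero]
  have : IsUnit (g * c) := by
    have := hnil.isUnit_add_left_of_commute isUnit_one (Commute.all _ _)
    simpa using this
  exact isUnit_of_mul_isUnit_left this

theorem strong_atom_of_irreducible_reduction (R : Type*) [CommRing R] [IsLocalRing R]
    (h𝔪 : ∀ a ∈ IsLocalRing.maximalIdeal R, IsNilpotent a)
    (f : Polynomial R)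
    (hirr : Irreducible (f.map (Ideal.Quotient.mk (IsLocalRing.maximalIdeal R)))) :
    f ≠ 0 ∧ ¬IsUnit f ∧ ∀ g h : Polynomial R, f = g * h → IsUnit g ∨ IsUnit h := by
  refine ⟨?_, ?_, ?_⟩
  · rintro rfl
    simp at hirr
  · intro hf
    exact hirr.not_isUnit (by simpa using hf.map (Polynomial.mapRingHom (Ideal.Quotient.mk (maximalIdeal R))))
  · intro g h hf
    have := hirr.isUnit_or_isUnit (by rw [hf, Polynomial.map_mul])
    rcases this with h1 | h1
    · exact Or.inl (unit_lift R h𝔪 g h1)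
    · exact Or.inr (unit_lift R h𝔪 h h1)
end

section
/- Let R be a reduced commutative ring with identity and let a ∈ R be a nonzero nonunit. If a = f·g with f, g ∈ R[t] and f is a strong atom of R[t], then g ∈ R (g is a constant polynomial). -/
/-- `f` is a strong atom: a nonzero nonunit such that in any factorization one
factor is a unit. -/
def StrongAtom {S : Type*} [CommRing S] (a : S) : Prop :=
  a ≠ 0 ∧ ¬IsUnit a ∧ ∀ b c : S, a = b * c → IsUnit b ∨ IsUnit c

open Polynomial

/-- In a quotient by a prime, a product of polynomials equal to a constant forces
all cross products of coefficients (with total index ≥ 1) into the prime. -/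
lemma coeff_mul_coeff_mem_prime {R : Type*} [CommRing R] {a : R} {f g : Polynomial R}
    (hfg : Polynomial.C a = f * g) (p : Ideal R) (hp : p.IsPrime) {i j : ℕ} (hj : j ≠ 0) :
    f.coeff i * g.coeff j ∈ p := by
  haveI := hp
  let φ := Ideal.Quotient.mk p
  have hmap : Polynomial.C (φ a) = f.map φ * g.map φ := by
    rw [← Polynomial.map_mul, ← hfg, Polynomial.map_C]
  rw [← Ideal.Quotient.eq_zero_iff_mem, map_mul]
  have hco : (φ (f.coeff i)) = (f.map φ).coeff i := (Polynomial.coeff_map φ i).symm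
  have hco' : (φ (g.coeff j)) = (g.map φ).coeff j := (Polynomial.coeff_map φ j).symm
  rw [hco, hco']
  by_cases ha : φ a = 0
  · rw [ha, map_zero] at hmap
    rcases mul_eq_zero.mp hmap.symm with h | h
    · rw [h, Polynomial.coeff_zero, zero_mul]
    · rw [h, Polynomial.coeff_zero, mul_zero]
  · have hf0 : f.map φ ≠ 0 := by
      rintro h; rw [h, zero_mul] at hmap
      exact ha (by simpa using congrArg (fun q => Polynomial.coeff q 0) hmap)
    have hg0 : g.map φ ≠ 0 := by
      rintro h; rw [h, mul_zero] at hmap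
      exact ha (by simpa using congrArg (fun q => Polynomial.coeff q 0) hmap)
    have hdeg : (f.map φ).natDegree + (g.map φ).natDegree = 0 := by
      rw [← Polynomial.natDegree_mul hf0 hg0, ← hmap, Polynomial.natDegree_C]
    have hgdeg : (g.map φ).natDegree = 0 := Nat.eq_zero_of_add_eq_zero_left hdeg
    have : (g.map φ).coeff j = 0 := by
      apply Polynomial.coeff_eq_zero_of_natDegree_lt
      omega
    rw [this, mul_zero]

theorem const_factor_of_strong_atom (R : Type*) [CommRing R] [IsReduced R]
    (a : R) (ha0 : a ≠ 0) (hau : ¬IsUnit a)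
    (f g : Polynomial R) (hfg : Polynomial.C a = f * g)
    (hf : StrongAtom f) :
    ∃ r : R, g = Polynomial.C r := by
  -- it suffices that all higher coefficients of g vanish
  have key : ∀ j : ℕ, j ≠ 0 → g.coeff j = 0 := by
    intro j hj
    by_contra hb
    set b := g.coeff j with hbdef
    -- b * (every coefficient of f) = 0
    have hbf : ∀ i : ℕ, f.coeff i * b = 0 := by
      intro i
      have : IsNilpotent (f.coeff i * b) :=
        nilpotent_iff_mem_prime.mpr fun p hp => coeff_mul_coeff_mem_prime hfg p hp hj
      exact IsReduced.eq_zero _ this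
    have hCbf : f * Polynomial.C b = 0 := by
      ext n
      rw [Polynomial.coeff_mul_C, Polynomial.coeff_zero, hbf n]
    -- f = f * (1 + C b * X)
    have hfact : f = f * (1 + Polynomial.C b * Polynomial.X) := by
      rw [mul_add, mul_one, ← mul_assoc, hCbf, zero_mul, add_zero]
    rcases hf.2.2 _ _ hfact with hu | hu
    · exact hf.2.1 hu
    · -- a unit polynomial has nilpotent higher coefficients
      have := (Polynomial.coeff_isUnit_isNilpotent_of_isUnit hu).2 1 one_ne_zero
      have hcoeff : (1 + Polynomial.C b * Polynomial.X).coeff 1 = b := by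
        simp [Polynomial.coeff_one]
      rw [hcoeff] at this
      exact hb (IsReduced.eq_zero _ this)
  refine ⟨g.coeff 0, ?_⟩
  ext n
  rcases Nat.eq_zero_or_pos n with rfl | hn
  · simp
  · rw [Polynomial.coeff_C, if_neg (by omega), key n (by omega)]
end

section
/- Let R be a reduced commutative ring with identity. If the polynomial ring R[t] is strongly atomic (every nonzero nonunit of R[t] is a finite product of strong atoms of R[t]), then R itself is strongly atomic. -/
open Polynomial

namespace Polynomial

variable {R : Type*} [CommRing R]

theorem eq_zero_of_forall_map_mk_eq_zero [IsReduced R] {f : R[X]}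
    (hf : ∀ P : Ideal R, P.IsPrime → f.map (Ideal.Quotient.mk P) = 0) : f = 0 := by
  ext n
  refine (nilpotent_iff_mem_prime.mpr fun P hP => ?_).eq_zero
  rw [← Ideal.Quotient.eq_zero_iff_mem, ← coeff_map, hf P hP, coeff_zero]

theorem mul_sub_C_coeff_zero_eq_zero_of_mul_eq_C_of_noZeroDivisors [NoZeroDivisors R]
    {g h : R[X]} {c : R} (hgh : g * h = C c) : g * (h - C (h.coeff 0)) = 0 := by
  rcases eq_or_ne g 0 with rfl | hg
  · rw [zero_mul]
  rcases eq_or_ne h 0 with rfl | hh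
  · simp
  have hdeg : h.natDegree = 0 := by
    have := natDegree_mul hg hh
    rw [hgh, natDegree_C] at this
    omega
  rw [← eq_C_of_natDegree_eq_zero hdeg, sub_self, mul_zero]

theorem mul_sub_C_coeff_zero_eq_zero_of_mul_eq_C [IsReduced R] {g h : R[X]} {c : R}
    (hgh : g * h = C c) : g * (h - C (h.coeff 0)) = 0 := by
  refine eq_zero_of_forall_map_mk_eq_zero fun P hP => ?_
  have hmod := mul_sub_C_coeff_zero_eq_zero_of_mul_eq_C_of_noZeroDivisors
    (g := g.map (Ideal.Quotient.mk P)) (h := h.map (Ideal.Quotient.mk P))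
    (by rw [← Polynomial.map_mul, hgh, map_C])
  rwa [coeff_map, ← map_C, ← Polynomial.map_sub, ← Polynomial.map_mul] at hmod

end Polynomial

namespace StrongAtom

variable {R : Type*} [CommRing R]

theorem of_C {c : R} (h : StrongAtom (C c)) : StrongAtom c := by
  refine ⟨fun h0 => h.1 (by rw [h0, map_zero]), fun hu => h.2.1 (isUnit_C.mpr hu),
    fun b d hbd => ?_⟩
  simpa only [isUnit_C] using h.2.2 (C b) (C d) (by rw [← C_mul, ← hbd])

variable [IsReduced R]

theorem eq_zero_of_mul_eq_zero {g w : R[X]} (hg : StrongAtom g) (hgw : g * w = 0) : w = 0 := by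
  have hfac : g = g * (1 + X * w) := by
    rw [mul_add, mul_one, mul_left_comm, hgw, mul_zero, add_zero]
  have hunit : IsUnit (1 + X * w) := (hg.2.2 _ _ hfac).resolve_left hg.2.1
  ext n
  have hcoeff : (1 + X * w).coeff (n + 1) = w.coeff n := by
    rw [coeff_add, coeff_X_mul, coeff_one, if_neg n.succ_ne_zero, zero_add]
  rw [coeff_zero, ← hcoeff]
  exact ((isUnit_iff_coeff_isUnit_isNilpotent.mp hunit).2 (n + 1) n.succ_ne_zero).eq_zero

theorem eq_C_coeff_zero_of_mul_eq_C {g h : R[X]} {c : R} (hg : StrongAtom g)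
    (hgh : g * h = C c) : h = C (h.coeff 0) :=
  sub_eq_zero.mp (hg.eq_zero_of_mul_eq_zero (mul_sub_C_coeff_zero_eq_zero_of_mul_eq_C hgh))

theorem eq_C_coeff_zero_of_prod_eq_C {ι : Type*} [DecidableEq ι] {g : ι → R[X]}
    (hg : ∀ i, StrongAtom (g i)) (s : Finset ι) {c : R} (hs : ∏ j ∈ s, g j = C c) :
    ∀ i ∈ s, g i = C ((g i).coeff 0) := by
  induction s using Finset.strongInduction generalizing c with
  | H s ih =>
    intro i hi
    by_cases hsi : s = {i}
    · rw [hsi, Finset.prod_singleton] at hs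
      rw [hs, coeff_C_zero]
    obtain ⟨j, hj, hji⟩ : ∃ j ∈ s, j ≠ i := by
      simpa [Finset.eq_singleton_iff_unique_mem, hi] using hsi
    have hrest := Finset.mul_prod_erase s g hj ▸ hs
    exact ih _ (Finset.erase_ssubset hj) ((hg j).eq_C_coeff_zero_of_mul_eq_C hrest) i
      (Finset.mem_erase.mpr ⟨hji.symm, hi⟩)

end StrongAtom

theorem strongly_atomic_descends (R : Type*) [CommRing R] [IsReduced R]
    (hRt : ∀ f : Polynomial R, f ≠ 0 → ¬IsUnit f →
      ∃ (m : ℕ) (g : Fin m → Polynomial R), 1 ≤ m ∧ (∀ i, StrongAtom (g i)) ∧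
        f = ∏ i, g i) :
    ∀ a : R, a ≠ 0 → ¬IsUnit a →
      ∃ (m : ℕ) (b : Fin m → R), 1 ≤ m ∧ (∀ i, StrongAtom (b i)) ∧ a = ∏ i, b i := by
  intro a ha hau
  obtain ⟨m, g, hm, hatoms, hfac⟩ :=
    hRt (C a) (by rwa [Ne, C_eq_zero]) (by rwa [isUnit_C])
  have hconst : ∀ i, g i = C ((g i).coeff 0) := fun i =>
    StrongAtom.eq_C_coeff_zero_of_prod_eq_C hatoms Finset.univ hfac.symm i (Finset.mem_univ i)
  refine ⟨m, fun i => (g i).coeff 0, hm, fun i => (hconst i ▸ hatoms i).of_C, C_injective ?_⟩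
  rw [hfac, map_prod]
  exact Finset.prod_congr rfl fun i _ => hconst i
end

section
/- Let R be a reduced commutative ring with identity, a ∈ R a nonzero nonunit, and f, g ∈ R[t] with a = f·g. If c is the leading coefficient of g and g ∉ R (deg g ≥ 1), then c·f = 0 in R[t]. -/
theorem leadingCoeff_annihilates (R : Type*) [CommRing R] [IsReduced R]
    (a : R) (ha0 : a ≠ 0) (hau : ¬IsUnit a)
    (f g : Polynomial R) (hfg : Polynomial.C a = f * g)
    (hg : 1 ≤ g.natDegree) :
    Polynomial.C g.leadingCoeff * f = 0 := by
  rw [Polynomial.ext_iff]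
  intro n
  rw [Polynomial.coeff_C_mul, Polynomial.coeff_zero]
  have key : ∀ (p : Ideal R), p.IsPrime → g.leadingCoeff * f.coeff n ∈ p := by
    intro p hp
    set q := Ideal.Quotient.mk p with hq
    have hmap : Polynomial.map q (Polynomial.C a) =
        Polynomial.map q f * Polynomial.map q g := by
      rw [hfg, Polynomial.map_mul]
    by_cases hgf : Polynomial.map q g = 0
    · have hc : q g.leadingCoeff = 0 := by
        have := Polynomial.coeff_map (f := q) (p := g) g.natDegree
        rw [hgf, Polynomial.coeff_zero] at this
        exact this.symm
      exact p.mul_mem_right _ (Ideal.Quotient.eq_zero_iff_mem.mp hc)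
    by_cases hff : Polynomial.map q f = 0
    · have hc : q (f.coeff n) = 0 := by
        rw [← Polynomial.coeff_map, hff, Polynomial.coeff_zero]
      exact p.mul_mem_left _ (Ideal.Quotient.eq_zero_iff_mem.mp hc)
    · have hdeg : (Polynomial.map q f).natDegree + (Polynomial.map q g).natDegree = 0 := by
        rw [← Polynomial.natDegree_mul hff hgf, ← hmap, Polynomial.map_C,
          Polynomial.natDegree_C]
      have hc : q g.leadingCoeff = 0 := by
        by_contra h
        have := Polynomial.le_natDegree_of_ne_zero
          (p := Polynomial.map q g) (n := g.natDegree)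
          (by rwa [Polynomial.coeff_map])
        omega
      exact p.mul_mem_right _ (Ideal.Quotient.eq_zero_iff_mem.mp hc)
  have : IsNilpotent (g.leadingCoeff * f.coeff n) := by
    rw [← mem_nilradical, nilradical_eq_sInf, Ideal.mem_sInf]
    intro J hJ
    exact key J hJ
  exact this.eq_zero
end

section
/- Let K be a field, A = K[x^α, y^β : α, β ∈ ℚ, α, β ≥ 0] the monoid algebra of ℚ≥0 × ℚ≥0 over K, and I ⊆ A the ideal generated by all monomials x^α y^β with α + β > 1. Then in the polynomial ring (A/I)[t], the element x + y·t (images of the degree-(1,0) and (0,1) monomials) is a strong atom: whenever x + y·t = f·g in (A/I)[t], either f or g is a unit. -/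
/-!
Grade `K[ℚ≥0 × ℚ≥0]` by total degree. The ideal `I` consists of the elements all of whose
monomials have degree `> 1`, so modulo `I` an element with nonzero constant coefficient is a
unit and one without constant coefficient is nilpotent.

Lift a factorization `x + y t = f g` to `F G` over `K[ℚ≥0 × ℚ≥0]` and let `P`, `Q` collect the
lowest homogeneous parts (of degrees `μ`, `ν`) of the coefficients of `F`, `G`. Parts of degree
`≤ 1` are not affected by `I`, and `F G` has no part of degree `< μ + ν`, so `μ + ν = 1` and
`P Q = x + y t` over a domain. One factor, say `Q = C b`, is then constant in `t`, and
`x · P₁ = y · P₀` makes every monomial of `P₁` a multiple of `y`, so `μ ≥ 1` and `ν = 0`.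
Hence the only degree-`0` monomial of `G` is a nonzero constant term of `G`, and `g` is a unit.
-/

open scoped NNRat
open Polynomial

namespace Polynomial

variable {R S : Type*} [Semiring R] [Semiring S]

noncomputable def mapCoeffs (φ : R →+ S) (F : R[X]) : S[X] :=
  F.sum fun n a ↦ monomial n (φ a)

@[simp]
theorem coeff_mapCoeffs (φ : R →+ S) (F : R[X]) (n : ℕ) :
    (mapCoeffs φ F).coeff n = φ (F.coeff n) := by
  rw [mapCoeffs, Polynomial.sum_def, finsetSum_coeff]
  simp only [coeff_monomial]
  rw [Finset.sum_ite_eq']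
  split_ifs with h
  · rfl
  · rw [notMem_support_iff.mp h, map_zero]

end Polynomial

namespace AddMonoidAlgebra

section HomogeneousComponent

variable {R M ι : Type*} [Semiring R] [DecidableEq ι] (deg : M → ι)

noncomputable def homogeneousComponent (d : ι) : R[M] →+ R[M] :=
  coeffAddEquiv.symm.toAddMonoidHom.comp <|
    (Finsupp.filterAddHom (deg · = d)).comp coeffAddEquiv.toAddMonoidHom

variable {deg}

theorem coeff_homogeneousComponent (d : ι) (a : R[M]) (m : M) :
    (homogeneousComponent deg d a).coeff m = if deg m = d then a.coeff m else 0 :=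
  Finsupp.filter_apply ..

theorem mem_support_homogeneousComponent {d : ι} {a : R[M]} {m : M} :
    m ∈ (homogeneousComponent deg d a).coeff.support ↔ m ∈ a.coeff.support ∧ deg m = d :=
  Finset.mem_filter

theorem homogeneousComponent_eq_self {d : ι} {a : R[M]}
    (h : ∀ m ∈ a.coeff.support, deg m = d) : homogeneousComponent deg d a = a :=
  coeff_injective <| (Finsupp.filter_eq_self_iff _ _).mpr fun m hm ↦
    h m (Finsupp.mem_support_iff.mpr hm)

theorem homogeneousComponent_eq_zero {d : ι} {a : R[M]}
    (h : ∀ m ∈ a.coeff.support, deg m ≠ d) : homogeneousComponent deg d a = 0 :=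
  coeff_injective <| (Finsupp.filter_eq_zero_iff _ _).mpr fun m hm ↦ by
    by_contra hne; exact h m (Finsupp.mem_support_iff.mpr hne) hm

theorem exists_lowest_homogeneousComponent [AddMonoid M] [LinearOrder ι] {F : R[M][X]}
    (hF : F ≠ 0) :
    ∃ μ, (∀ n, ∀ m ∈ (F.coeff n).coeff.support, μ ≤ deg m) ∧
      mapCoeffs (homogeneousComponent deg μ) F ≠ 0 := by
  classical
  set D := F.support.biUnion fun n ↦ (F.coeff n).coeff.support.image deg
  have mem_D {n m} (hm : m ∈ (F.coeff n).coeff.support) : deg m ∈ D :=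
    Finset.mem_biUnion.mpr ⟨n, mem_support_iff.mpr fun h ↦ by simp [h] at hm,
      Finset.mem_image_of_mem deg hm⟩
  obtain ⟨m, hm⟩ := Finsupp.support_nonempty_iff.mpr
    (coeff_eq_zero.not.mpr (Polynomial.leadingCoeff_ne_zero.mpr hF))
  have hD : D.Nonempty := ⟨_, mem_D hm⟩
  refine ⟨D.min' hD, fun n m hm ↦ D.min'_le _ (mem_D hm), fun h ↦ ?_⟩
  obtain ⟨n, -, hn⟩ := Finset.mem_biUnion.mp (D.min'_mem hD)
  obtain ⟨m, hm, hmμ⟩ := Finset.mem_image.mp hn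
  have : m ∈ (homogeneousComponent deg (D.min' hD) (F.coeff n)).coeff.support :=
    mem_support_homogeneousComponent.mpr ⟨hm, hmμ⟩
  rw [← coeff_mapCoeffs, h] at this
  simp at this

end HomogeneousComponent

section LowestComponent

variable {R M ι : Type*} [Semiring R] [AddMonoid M] [AddCommMonoid ι] {deg : M →+ ι}

theorem exists_degree_eq_add_of_mem_support_mul {a b : R[M]} {r : M}
    (hr : r ∈ (a * b).coeff.support) :
    ∃ p ∈ a.coeff.support, ∃ q ∈ b.coeff.support, deg r = deg p + deg q := by
  classical
  obtain ⟨p, hp, q, hq, rfl⟩ := Finset.mem_add.mp (support_coeff_mul_subset a b hr)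
  exact ⟨p, hp, q, hq, map_add deg p q⟩

variable [LinearOrder ι] [IsOrderedCancelAddMonoid ι]

theorem add_le_degree_of_mem_support_mul {a b : R[M]} {μ ν : ι}
    (ha : ∀ m ∈ a.coeff.support, μ ≤ deg m) (hb : ∀ m ∈ b.coeff.support, ν ≤ deg m) :
    ∀ r ∈ (a * b).coeff.support, μ + ν ≤ deg r := by
  intro r hr
  obtain ⟨p, hp, q, hq, hpq⟩ := exists_degree_eq_add_of_mem_support_mul (deg := deg) hr
  exact hpq ▸ add_le_add (ha p hp) (hb q hq)

variable [DecidableEq ι]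

theorem homogeneousComponent_add_mul {a b : R[M]} {μ ν : ι}
    (ha : ∀ m ∈ a.coeff.support, μ ≤ deg m) (hb : ∀ m ∈ b.coeff.support, ν ≤ deg m) :
    homogeneousComponent deg (μ + ν) (a * b) =
      homogeneousComponent deg μ a * homogeneousComponent deg ν b := by
  classical
  set a₀ := homogeneousComponent deg μ a
  set b₀ := homogeneousComponent deg ν b
  set a₁ : R[M] := ofCoeff (a.coeff.filter (deg · ≠ μ))
  set b₁ : R[M] := ofCoeff (b.coeff.filter (deg · ≠ ν))
  have ha₀ : ∀ m ∈ a₀.coeff.support, deg m = μ := fun m hm ↦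
    (mem_support_homogeneousComponent.mp hm).2
  have hb₀ : ∀ m ∈ b₀.coeff.support, deg m = ν := fun m hm ↦
    (mem_support_homogeneousComponent.mp hm).2
  have ha₁ : ∀ m ∈ a₁.coeff.support, μ < deg m := fun m hm ↦
    (ha m (Finset.mem_filter.mp hm).1).lt_of_ne' (Finset.mem_filter.mp hm).2
  have hb₁ : ∀ m ∈ b₁.coeff.support, ν < deg m := fun m hm ↦
    (hb m (Finset.mem_filter.mp hm).1).lt_of_ne' (Finset.mem_filter.mp hm).2
  have hab : a * b = a₀ * b₀ + (a₀ * b₁ + a₁ * b) := by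
    have ha : a₀ + a₁ = a := coeff_injective (Finsupp.filter_add_filter_not ..)
    have hb : b₀ + b₁ = b := coeff_injective (Finsupp.filter_add_filter_not ..)
    rw [← add_assoc, ← mul_add, hb, ← add_mul, ha]
  have hlow : homogeneousComponent deg (μ + ν) (a₀ * b₀) = a₀ * b₀ :=
    homogeneousComponent_eq_self fun r hr ↦ by
      obtain ⟨p, hp, q, hq, hpq⟩ := exists_degree_eq_add_of_mem_support_mul (deg := deg) hr
      rw [hpq, ha₀ p hp, hb₀ q hq]
  have hhigh : homogeneousComponent deg (μ + ν) (a₀ * b₁ + a₁ * b) = 0 := by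
    refine homogeneousComponent_eq_zero fun r hr ↦ ne_of_gt ?_
    rcases Finset.mem_union.mp (Finsupp.support_add hr) with hr | hr
    all_goals obtain ⟨p, hp, q, hq, hpq⟩ := exists_degree_eq_add_of_mem_support_mul (deg := deg) hr
    · exact hpq ▸ add_lt_add_of_le_of_lt (ha₀ p hp).ge (hb₁ q hq)
    · exact hpq ▸ add_lt_add_of_lt_of_le (ha₁ p hp) (hb q hq)
  rw [hab, map_add, hlow, hhigh, add_zero]

theorem mapCoeffs_homogeneousComponent_add_mul {F G : R[M][X]} {μ ν : ι}
    (hF : ∀ n, ∀ m ∈ (F.coeff n).coeff.support, μ ≤ deg m)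
    (hG : ∀ n, ∀ m ∈ (G.coeff n).coeff.support, ν ≤ deg m) :
    mapCoeffs (homogeneousComponent deg (μ + ν)) (F * G) =
      mapCoeffs (homogeneousComponent deg μ) F * mapCoeffs (homogeneousComponent deg ν) G := by
  ext n : 1
  simp only [coeff_mapCoeffs, Polynomial.coeff_mul, map_sum]
  exact Finset.sum_congr rfl fun ij _ ↦ homogeneousComponent_add_mul (hF ij.1) (hG ij.2)

end LowestComponent

end AddMonoidAlgebra

open AddMonoidAlgebra

section QuotientByHighDegrees

variable (K : Type*) [Field K]

def totalDegree : ℚ≥0 × ℚ≥0 →+ ℚ≥0 := (AddMonoidHom.id _).coprod (AddMonoidHom.id _)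

noncomputable def highDegreeIdeal : Ideal K[ℚ≥0 × ℚ≥0] :=
  Ideal.span {m | ∃ α β : ℚ≥0, 1 < α + β ∧ m = single (α, β) (1 : K)}

noncomputable def xPlusYT : K[ℚ≥0 × ℚ≥0][X] :=
  C (single (1, 0) 1) + C (single (0, 1) 1) * X

variable {K}

local notation "mk" => Ideal.Quotient.mk (highDegreeIdeal _)

theorem totalDegree_apply (m : ℚ≥0 × ℚ≥0) : totalDegree m = m.1 + m.2 := rfl

theorem totalDegree_eq_zero {m : ℚ≥0 × ℚ≥0} : totalDegree m = 0 ↔ m = 0 := by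
  simp [totalDegree_apply, Prod.ext_iff]

theorem mem_highDegreeIdeal_iff {a : K[ℚ≥0 × ℚ≥0]} :
    a ∈ highDegreeIdeal K ↔ ∀ m ∈ a.coeff.support, 1 < totalDegree m := by
  have : highDegreeIdeal K = Ideal.span (of' K _ '' {m | 1 < totalDegree m}) := by
    rw [highDegreeIdeal]
    congr 1
    ext a
    simp [of', totalDegree_apply, @eq_comm _ a]
  rw [this, mem_ideal_span_of'_image]
  refine forall₂_congr fun m _ ↦ ⟨?_, fun h ↦ ⟨m, h, 0, (zero_add m).symm⟩⟩
  rintro ⟨m', hm', d, rfl⟩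
  exact hm'.trans_le (by simp [map_add])

theorem single_notMem_highDegreeIdeal {m : ℚ≥0 × ℚ≥0} (hm : totalDegree m ≤ 1) {c : K}
    (hc : c ≠ 0) : single m c ∉ highDegreeIdeal K := fun h ↦
  (mem_highDegreeIdeal_iff.mp h m (by simpa using hc)).not_ge hm

theorem isNilpotent_mk_of_coeff_zero_eq_zero {a : K[ℚ≥0 × ℚ≥0]} (ha : a.coeff 0 = 0) :
    IsNilpotent (mk a) := by
  rw [← a.sum_coeff_single, Finsupp.sum, map_sum]
  refine isNilpotent_sum fun m hm ↦ ?_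
  have hpos : 0 < totalDegree m :=
    pos_iff_ne_zero.mpr fun h ↦ Finsupp.mem_support_iff.mp hm (totalDegree_eq_zero.mp h ▸ ha)
  obtain ⟨n, hn⟩ := exists_nat_gt (totalDegree m)⁻¹
  refine ⟨n, ?_⟩
  rw [← map_pow, single_pow, Ideal.Quotient.eq_zero_iff_mem, mem_highDegreeIdeal_iff]
  intro m' hm'
  rw [Finset.mem_singleton.mp (Finsupp.support_single_subset hm'), map_nsmul, nsmul_eq_mul]
  exact (inv_lt_iff_one_lt_mul₀ hpos).mp hn

theorem isUnit_mk_of_coeff_zero_ne_zero {a : K[ℚ≥0 × ℚ≥0]} (ha : a.coeff 0 ≠ 0) :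
    IsUnit (mk a) := by
  have hnil : IsNilpotent (mk (a - single 0 (a.coeff 0))) :=
    isNilpotent_mk_of_coeff_zero_eq_zero (by simp)
  have hunit : IsUnit (mk (single 0 (a.coeff 0))) :=
    (ha.isUnit.map (singleZeroRingHom (M := ℚ≥0 × ℚ≥0))).map mk
  simpa using hnil.isUnit_add_left_of_commute hunit (Commute.all _ _)

theorem homogeneousComponent_zero_eq_single (a : K[ℚ≥0 × ℚ≥0]) :
    homogeneousComponent totalDegree 0 a = single 0 (a.coeff 0) := by
  ext m
  simp only [coeff_homogeneousComponent, totalDegree_eq_zero, coeff_single, Finsupp.single_apply]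
  split_ifs with h₁ h₂ h₂ <;> simp_all

theorem isUnit_map_mk_of_mapCoeffs_zero_eq_C {G : K[ℚ≥0 × ℚ≥0][X]} {b : K[ℚ≥0 × ℚ≥0]}
    (hG : mapCoeffs (homogeneousComponent totalDegree 0) G = C b) (hb : b ≠ 0) :
    IsUnit (G.map mk) := by
  have hcoeff (n : ℕ) : single 0 ((G.coeff n).coeff 0) = (C b).coeff n := by
    rw [← homogeneousComponent_zero_eq_single, ← coeff_mapCoeffs, hG]
  rw [isUnit_iff_coeff_isUnit_isNilpotent]
  simp only [Polynomial.coeff_map]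
  refine ⟨isUnit_mk_of_coeff_zero_ne_zero fun h ↦ hb ?_, fun n hn ↦ ?_⟩
  · simpa [h] using (hcoeff 0).symm
  · exact isNilpotent_mk_of_coeff_zero_eq_zero <| single_eq_zero.mp <|
      (hcoeff n).trans (coeff_C_of_ne_zero hn)

theorem one_le_snd_of_single_mul_eq {p q : K[ℚ≥0 × ℚ≥0]}
    (h : single (1, 0) 1 * p = single (0, 1) 1 * q) {m : ℚ≥0 × ℚ≥0}
    (hm : m ∈ p.coeff.support) : 1 ≤ m.2 := by
  classical
  have hmem : (1, 0) + m ∈ (single (0, 1) (1 : K) * q).coeff.support := by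
    rw [← h, Finsupp.mem_support_iff, coeff_single_mul_add, one_mul]
    exact Finsupp.mem_support_iff.mp hm
  obtain ⟨m', -, hm'⟩ := Finset.mem_image.mp (support_coeff_single_mul_subset q 1 _ hmem)
  have := congrArg Prod.snd hm'
  rw [Prod.snd_add, Prod.snd_add, zero_add] at this
  exact this ▸ le_self_add

theorem totalDegree_eq_one_of_mem_support_coeff_xPlusYT {n : ℕ} {m : ℚ≥0 × ℚ≥0}
    (hm : m ∈ ((xPlusYT K).coeff n).coeff.support) : totalDegree m = 1 := by
  simp only [xPlusYT, Polynomial.coeff_add, coeff_C, coeff_C_mul_X] at hm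
  split_ifs at hm <;> simp_all [totalDegree_apply]

theorem mapCoeffs_xPlusYT (d : ℚ≥0) :
    mapCoeffs (homogeneousComponent totalDegree d) (xPlusYT K) =
      if d = 1 then xPlusYT K else 0 := by
  ext n : 1
  rw [coeff_mapCoeffs]
  split_ifs with hd
  · exact homogeneousComponent_eq_self fun m hm ↦
      hd ▸ totalDegree_eq_one_of_mem_support_coeff_xPlusYT hm
  · exact homogeneousComponent_eq_zero fun m hm h ↦
      hd (h ▸ totalDegree_eq_one_of_mem_support_coeff_xPlusYT hm)

theorem natDegree_xPlusYT : (xPlusYT K).natDegree = 1 := by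
  rw [xPlusYT, add_comm]
  exact natDegree_linear (single_eq_zero.not.mpr one_ne_zero)

theorem map_mk_xPlusYT_ne_zero : (xPlusYT K).map mk ≠ 0 := fun h ↦ by
  have hy : (xPlusYT K).coeff 1 = single (0, 1) 1 := by simp [xPlusYT]
  refine single_notMem_highDegreeIdeal (m := (0, 1)) (by simp [totalDegree_apply])
    (one_ne_zero (α := K)) ?_
  rw [← hy, ← Ideal.Quotient.eq_zero_iff_mem, ← Polynomial.coeff_map, h, Polynomial.coeff_zero]

theorem mapCoeffs_homogeneousComponent_eq_of_map_mk_eq {F : K[ℚ≥0 × ℚ≥0][X]}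
    (h : F.map mk = (xPlusYT K).map mk) {d : ℚ≥0} (hd : d ≤ 1) :
    mapCoeffs (homogeneousComponent totalDegree d) F =
      mapCoeffs (homogeneousComponent totalDegree d) (xPlusYT K) := by
  ext n : 1
  have hI : F.coeff n - (xPlusYT K).coeff n ∈ highDegreeIdeal K :=
    Ideal.Quotient.eq.mp (by simpa using congrArg (Polynomial.coeff · n) h)
  rw [coeff_mapCoeffs, coeff_mapCoeffs, ← sub_eq_zero, ← map_sub]
  exact homogeneousComponent_eq_zero fun m hm ↦
    ((hd.trans_lt (mem_highDegreeIdeal_iff.mp hI m hm))).ne'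

theorem lowest_mul_lowest_eq_xPlusYT {F G : K[ℚ≥0 × ℚ≥0][X]} {μ ν : ℚ≥0}
    (h : (F * G).map mk = (xPlusYT K).map mk)
    (hF : ∀ n, ∀ m ∈ (F.coeff n).coeff.support, μ ≤ totalDegree m)
    (hG : ∀ n, ∀ m ∈ (G.coeff n).coeff.support, ν ≤ totalDegree m)
    (hP : mapCoeffs (homogeneousComponent totalDegree μ) F ≠ 0)
    (hQ : mapCoeffs (homogeneousComponent totalDegree ν) G ≠ 0) :
    μ + ν = 1 ∧ mapCoeffs (homogeneousComponent totalDegree μ) F *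
      mapCoeffs (homogeneousComponent totalDegree ν) G = xPlusYT K := by
  have hle : μ + ν ≤ 1 := by
    by_contra! hlt
    have h₀ : (F * G).coeff 0 ∈ highDegreeIdeal K := by
      refine mem_highDegreeIdeal_iff.mpr fun m hm ↦ hlt.trans_le ?_
      rw [mul_coeff_zero] at hm
      exact add_le_degree_of_mem_support_mul (hF 0) (hG 0) m hm
    have h₁ : (F * G).coeff 0 - (xPlusYT K).coeff 0 ∈ highDegreeIdeal K :=
      Ideal.Quotient.eq.mp (by simpa using congrArg (Polynomial.coeff · 0) h)
    refine single_notMem_highDegreeIdeal (m := (1, 0)) (by simp [totalDegree_apply])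
      (one_ne_zero (α := K)) ?_
    simpa [xPlusYT] using sub_mem h₀ h₁
  have hPQ := mul_ne_zero hP hQ
  rw [← mapCoeffs_homogeneousComponent_add_mul hF hG,
    mapCoeffs_homogeneousComponent_eq_of_map_mk_eq h hle, mapCoeffs_xPlusYT] at hPQ ⊢
  split_ifs at hPQ ⊢ with h₁
  · exact ⟨h₁, rfl⟩
  · exact absurd rfl hPQ

theorem one_le_of_mul_C_eq_xPlusYT {P : K[ℚ≥0 × ℚ≥0][X]} {b : K[ℚ≥0 × ℚ≥0]} {μ : ℚ≥0}
    (hP : ∀ n, ∀ m ∈ (P.coeff n).coeff.support, totalDegree m = μ)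
    (h : P * C b = xPlusYT K) : 1 ≤ μ := by
  have h₀ : P.coeff 0 * b = single (1, 0) 1 := by
    simpa [xPlusYT] using congrArg (Polynomial.coeff · 0) h
  have h₁ : P.coeff 1 * b = single (0, 1) 1 := by
    simpa [xPlusYT] using congrArg (Polynomial.coeff · 1) h
  have hcross : single (1, 0) 1 * P.coeff 1 = single (0, 1) 1 * P.coeff 0 := by
    rw [← h₀, ← h₁]; ring
  obtain ⟨m, hm⟩ : (P.coeff 1).coeff.support.Nonempty := by
    refine Finsupp.support_nonempty_iff.mpr (coeff_eq_zero.not.mpr fun h0 ↦ ?_)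
    rw [h0, zero_mul] at h₁
    exact single_ne_zero.mpr (one_ne_zero (α := K)) h₁.symm
  calc 1 ≤ m.2 := one_le_snd_of_single_mul_eq hcross hm
    _ ≤ totalDegree m := le_add_self
    _ = μ := hP 1 m hm

theorem isUnit_map_mk_of_lowest_mul_eq_xPlusYT {F G : K[ℚ≥0 × ℚ≥0][X]} {μ ν : ℚ≥0}
    (hsum : μ + ν = 1)
    (hmul : mapCoeffs (homogeneousComponent totalDegree μ) F *
      mapCoeffs (homogeneousComponent totalDegree ν) G = xPlusYT K)
    (hdeg : (mapCoeffs (homogeneousComponent totalDegree ν) G).natDegree = 0) :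
    IsUnit (G.map mk) := by
  set Q := mapCoeffs (homogeneousComponent totalDegree ν) G
  have hQ : Q = C (Q.coeff 0) := eq_C_of_natDegree_eq_zero hdeg
  have hQ0 : Q.coeff 0 ≠ 0 := fun h0 ↦ by
    rw [hQ, h0, map_zero, mul_zero] at hmul
    exact map_mk_xPlusYT_ne_zero (by rw [← hmul, Polynomial.map_zero])
  rw [hQ] at hmul
  have hμ : 1 ≤ μ := one_le_of_mul_C_eq_xPlusYT (fun n m hm ↦
    (mem_support_homogeneousComponent.mp (by rwa [coeff_mapCoeffs] at hm)).2) hmul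
  obtain rfl : ν = 0 := by
    rw [← hsum] at hμ
    simpa using hμ
  exact isUnit_map_mk_of_mapCoeffs_zero_eq_C hQ hQ0

end QuotientByHighDegrees

theorem x_plus_yt_strong_atom (K : Type*) [Field K] :
    let A := AddMonoidAlgebra K (ℚ≥0 × ℚ≥0)
    let I : Ideal A := Ideal.span
      {m : A | ∃ α β : ℚ≥0, 1 < α + β ∧ m = AddMonoidAlgebra.single (α, β) (1 : K)}
    let x : A ⧸ I := Ideal.Quotient.mk I (AddMonoidAlgebra.single ((1 : ℚ≥0), (0 : ℚ≥0)) (1 : K))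
    let y : A ⧸ I := Ideal.Quotient.mk I (AddMonoidAlgebra.single ((0 : ℚ≥0), (1 : ℚ≥0)) (1 : K))
    ∀ f g : Polynomial (A ⧸ I),
      Polynomial.C x + Polynomial.C y * Polynomial.X = f * g →
        IsUnit f ∨ IsUnit g := by
  intro A I x y f g h
  obtain ⟨F, rfl⟩ := map_surjective _ Ideal.Quotient.mk_surjective f
  obtain ⟨G, rfl⟩ := map_surjective _ Ideal.Quotient.mk_surjective g
  have hFG : (F * G).map (Ideal.Quotient.mk (highDegreeIdeal K)) =
      (xPlusYT K).map (Ideal.Quotient.mk (highDegreeIdeal K)) := by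
    rw [Polynomial.map_mul]
    refine h.symm.trans ?_
    simp [xPlusYT]
    rfl
  have hne : F * G ≠ 0 := fun h0 ↦ map_mk_xPlusYT_ne_zero (by rw [← hFG, h0, Polynomial.map_zero])
  obtain ⟨μ, hFμ, hP⟩ := exists_lowest_homogeneousComponent (deg := totalDegree)
    (left_ne_zero_of_mul hne)
  obtain ⟨ν, hGν, hQ⟩ := exists_lowest_homogeneousComponent (deg := totalDegree)
    (right_ne_zero_of_mul hne)
  obtain ⟨hsum, hmul⟩ := lowest_mul_lowest_eq_xPlusYT hFG hFμ hGν hP hQ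
  have hdeg := natDegree_mul hP hQ
  rw [hmul, natDegree_xPlusYT] at hdeg
  rcases Nat.add_eq_one_iff.mp hdeg.symm with ⟨h₀, -⟩ | ⟨-, h₀⟩
  · exact .inl (isUnit_map_mk_of_lowest_mul_eq_xPlusYT ((add_comm ..).trans hsum)
      ((mul_comm ..).trans hmul) h₀)
  · exact .inr (isUnit_map_mk_of_lowest_mul_eq_xPlusYT hsum hmul h₀)
end

section
/- Let F be a perfect field of characteristic p > 0, T = F[x_i^α : i ∈ ℕ, α ∈ ℚ≥0] the monoid algebra over the monoid of finitely supported functions ℕ → ℚ≥0, I the ideal generated by all monomials of total degree strictly greater than 1, and R = T/I. Then R has no atoms: for every nonzero nonunit a ∈ R there exist b, c ∈ R with a = b·c, (a) ≠ (b), and (a) ≠ (c). In particular R is not atomic. -/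
/-!
Modulo `I` every monomial of positive degree is nilpotent, so every nonunit `a` of `R` is
nilpotent. Since `F` is perfect and exponents are divisible by `p`, Frobenius is surjective on
`T`, so `a = b ^ p = b * b ^ (p - 1)` with both factors nilpotent. If `(a) = (b)`, then
`b = x b b ^ (p - 1)` and `1 - x b ^ (p - 1)` is a unit, forcing `b = 0`; the same argument applies
to `b ^ (p - 1)`.
-/

open scoped NNRat

section NilpotentFactor

variable {R : Type*} [CommRing R]

theorem eq_zero_of_mem_span_singleton_mul {b c : R} (hc : IsNilpotent c)
    (h : b ∈ Ideal.span {b * c}) : b = 0 := by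
  obtain ⟨x, hx⟩ := Ideal.mem_span_singleton'.mp h
  have hunit : IsUnit (1 - x * c) := ((Commute.all x c).isNilpotent_mul_left hc).isUnit_one_sub
  have hkill : b * (1 - x * c) = 0 := by linear_combination -hx
  exact hunit.mul_left_eq_zero.mp hkill

theorem span_singleton_mul_ne_of_isNilpotent {b c : R} (hb : b ≠ 0) (hc : IsNilpotent c) :
    Ideal.span {b * c} ≠ Ideal.span {b} := fun h =>
  hb <| eq_zero_of_mem_span_singleton_mul hc (h ▸ Ideal.mem_span_singleton_self b)

theorem exists_mul_eq_pow_span_ne {b : R} {n : ℕ} (hn : 2 ≤ n) (hbn : b ^ n ≠ 0)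
    (hb : IsNilpotent b) :
    ∃ c d : R, b ^ n = c * d ∧
      Ideal.span {b ^ n} ≠ Ideal.span {c} ∧ Ideal.span {b ^ n} ≠ Ideal.span {d} := by
  have hfac : b ^ n = b * b ^ (n - 1) := (mul_pow_sub_one (by omega) b).symm
  refine ⟨b, b ^ (n - 1), hfac, ?_, ?_⟩
  · rw [hfac]
    exact span_singleton_mul_ne_of_isNilpotent (left_ne_zero_of_mul (hfac ▸ hbn))
      (hb.pow_of_pos (by omega))
  · rw [hfac, mul_comm]
    exact span_singleton_mul_ne_of_isNilpotent (right_ne_zero_of_mul (hfac ▸ hbn)) hb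

end NilpotentFactor

namespace AddMonoidAlgebra

instance charP {R M : Type*} [CommSemiring R] [AddMonoid M] (p : ℕ) [CharP R p] :
    CharP R[M] p :=
  charP_of_injective_algebraMap single_right_injective p

theorem exists_pow_char_eq {R M : Type*} [CommSemiring R] [AddCommMonoid M] (p : ℕ) [Fact p.Prime]
    [CharP R p] [PerfectRing R p] (hM : ∀ m : M, ∃ n, p • n = m) (t : R[M]) :
    ∃ s, s ^ p = t := by
  induction t using induction_linear with
  | zero => exact ⟨0, zero_pow (Fact.out : p.Prime).ne_zero⟩
  | add t u ht hu =>
    obtain ⟨s, rfl⟩ := ht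
    obtain ⟨s', rfl⟩ := hu
    exact ⟨s + s', add_pow_char _ _ _⟩
  | single m r =>
    obtain ⟨n, rfl⟩ := hM m
    obtain ⟨q, rfl⟩ := (PerfectRing.bijective_frobenius (R := R) (p := p)).surjective r
    exact ⟨single n q, single_pow _ _ _⟩

section Quotient

variable {R σ : Type*} [CommRing R] {I : Ideal R[σ →₀ ℚ≥0]}

theorem isNilpotent_mk_single (hI : ∀ e : σ →₀ ℚ≥0, 1 < e.degree → single e 1 ∈ I)
    {e : σ →₀ ℚ≥0} (he : e ≠ 0) (r : R) : IsNilpotent (Ideal.Quotient.mk I (single e r)) := by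
  have hdeg : 0 < e.degree := pos_of_ne_zero ((Finsupp.degree_eq_zero_iff e).not.mpr he)
  obtain ⟨k, hk⟩ := exists_nat_gt e.degree⁻¹
  refine ⟨k, ?_⟩
  have hmem : single (k • e) 1 ∈ I := by
    refine hI _ ?_
    rw [map_nsmul, nsmul_eq_mul]
    exact (inv_lt_iff_one_lt_mul₀ hdeg).mp hk
  rw [← map_pow, single_pow, Ideal.Quotient.eq_zero_iff_mem,
    show single (k • e) (r ^ k) = single 0 (r ^ k) * single (k • e) 1 by
      rw [single_mul_single, zero_add, mul_one]]
  exact I.mul_mem_left _ hmem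

theorem isNilpotent_mk_of_coeff_zero (hI : ∀ e : σ →₀ ℚ≥0, 1 < e.degree → single e 1 ∈ I)
    {t : R[σ →₀ ℚ≥0]} (ht : t.coeff 0 = 0) : IsNilpotent (Ideal.Quotient.mk I t) := by
  rw [← mem_nilradical, ← sum_coeff_single t, Finsupp.sum, map_sum]
  refine Ideal.sum_mem _ fun e _ => ?_
  rcases eq_or_ne e 0 with rfl | he
  · simp [ht]
  · exact isNilpotent_mk_single hI he _

end Quotient

theorem isNilpotent_mk_of_not_isUnit {K σ : Type*} [Field K] {I : Ideal K[σ →₀ ℚ≥0]}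
    (hI : ∀ e : σ →₀ ℚ≥0, 1 < e.degree → single e 1 ∈ I) {t : K[σ →₀ ℚ≥0]}
    (ht : ¬IsUnit (Ideal.Quotient.mk I t)) : IsNilpotent (Ideal.Quotient.mk I t) := by
  refine isNilpotent_mk_of_coeff_zero hI (not_not.mp fun h0 => ht ?_)
  have hconst : IsUnit (Ideal.Quotient.mk I (single 0 (t.coeff 0))) :=
    (isUnit_iff_ne_zero.mpr h0).map ((Ideal.Quotient.mk I).comp singleZeroRingHom)
  have hrest : IsNilpotent (Ideal.Quotient.mk I (t - single 0 (t.coeff 0))) :=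
    isNilpotent_mk_of_coeff_zero hI (by simp)
  simpa using hrest.isUnit_add_left_of_commute hconst (Commute.all _ _)

end AddMonoidAlgebra

theorem antimatter_quotient (F : Type*) [Field F] (p : ℕ) [Fact p.Prime]
    [CharP F p] [PerfectRing F p] :
    let T := AddMonoidAlgebra F (ℕ →₀ ℚ≥0)
    let I : Ideal T := Ideal.span
      {m : T | ∃ e : ℕ →₀ ℚ≥0, 1 < e.sum (fun _ v => v) ∧ m = AddMonoidAlgebra.single e (1 : F)}
    ∀ a : T ⧸ I, a ≠ 0 → ¬IsUnit a →
      ∃ b c : T ⧸ I, a = b * c ∧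
        Ideal.span {a} ≠ Ideal.span {b} ∧ Ideal.span {a} ≠ Ideal.span {c} := by
  intro T I a ha hu
  have hI : ∀ e : ℕ →₀ ℚ≥0, 1 < e.degree → AddMonoidAlgebra.single e 1 ∈ I :=
    fun e he => Ideal.subset_span ⟨e, he, rfl⟩
  obtain ⟨t, rfl⟩ := Ideal.Quotient.mk_surjective a
  have hnil := AddMonoidAlgebra.isNilpotent_mk_of_not_isUnit hI hu
  have hp : (p : ℚ≥0) ≠ 0 := Nat.cast_ne_zero.mpr (Fact.out : p.Prime).ne_zero
  have hdiv (e : ℕ →₀ ℚ≥0) : ∃ e', p • e' = e :=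
    ⟨(p : ℚ≥0)⁻¹ • e, by rw [← Nat.cast_smul_eq_nsmul ℚ≥0, smul_inv_smul₀ hp]⟩
  obtain ⟨s, rfl⟩ := AddMonoidAlgebra.exists_pow_char_eq p hdiv t
  rw [map_pow] at ha hnil ⊢
  exact exists_mul_eq_pow_span_ne (Fact.out : p.Prime).two_le ha hnil.of_pow
end

section
/- Let F be a perfect field of characteristic p > 0, R = T/I with T = F[x_i^α : i ∈ ℕ, α ∈ ℚ≥0] and I the ideal generated by all monomials of total degree > 1. Then every nonzero nonunit of R satisfies a^{p^N} = 0 for some N, i.e., every nonunit of R is nilpotent; hence R is quasi-local with maximal ideal the set of nilpotents, and R is zero-dimensional. -/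
/-!
Let `ψ : T → F` take the constant coefficient. A nonzero `x ∈ ker ψ` has finitely many exponents,
all of positive degree, say `≥ d > 0`; then every exponent of `x ^ k` has degree `≥ k d`, which
exceeds `1` for large `k`, so `x ^ k ∈ I`. Thus `ψ` descends to `T ⧸ I → F` with nil kernel, and an
element outside the kernel is a nonzero scalar plus a nilpotent, hence a unit. The nonunits of
`T ⧸ I` are therefore exactly its nilpotents, which makes it local of Krull dimension zero.
-/

open scoped NNRat
open Finsupp

theorem AlgHom.isNilpotent_iff_not_isUnit {K A : Type*} [Field K] [CommRing A] [Algebra K A]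
    (f : A →ₐ[K] K) (hf : ∀ a, f a = 0 → IsNilpotent a) (a : A) : IsNilpotent a ↔ ¬IsUnit a := by
  have hnil : IsNilpotent a ↔ f a = 0 := ⟨fun h ↦ (h.map f).eq_zero, hf a⟩
  have hunit : IsUnit a ↔ f a ≠ 0 := by
    refine ⟨fun h ↦ (h.map f).ne_zero, fun h ↦ ?_⟩
    -- `a = f a + (a - f a)`, a unit plus an element of the kernel
    have hker := hf (a - algebraMap K A (f a)) (by simp)
    simpa using hker.isUnit_add_right_of_commute (h.isUnit.map (algebraMap K A)) (.all _ _)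
  rw [hnil, hunit, not_not]

namespace AddMonoidAlgebra

section ConstantCoeff

variable (R : Type*) {M : Type*} [CommSemiring R] [AddCommMonoid M] [Subsingleton (AddUnits M)]

open Classical in
noncomputable def constantCoeff : R[M] →ₐ[R] R :=
  lift R R M
    { toFun e := if e.toAdd = 0 then 1 else 0
      map_one' := by simp
      map_mul' a b := by
        by_cases ha : a.toAdd = 0 <;> by_cases hb : b.toAdd = 0 <;> simp [ha, hb, add_eq_zero] }

variable {R}

theorem constantCoeff_apply (x : R[M]) : constantCoeff R x = x.coeff 0 := by
  classical
  induction x using induction_linear with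
  | zero => simp
  | add x y hx hy => simp [hx, hy]
  | single m r => by_cases hm : m = 0 <;> simp [constantCoeff, hm, coeff_single, eq_comm]

end ConstantCoeff

section HighDegreeIdeal

variable (R σ : Type*) [CommSemiring R]

noncomputable def highDegreeIdeal : Ideal R[σ →₀ ℚ≥0] :=
  Ideal.span {m | ∃ e : σ →₀ ℚ≥0, 1 < e.degree ∧ m = single e 1}

variable {R σ}

theorem mem_highDegreeIdeal_of_forall_one_lt_degree {x : R[σ →₀ ℚ≥0]}
    (hx : ∀ e ∈ x.coeff.support, 1 < e.degree) : x ∈ highDegreeIdeal R σ := by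
  rw [← sum_coeff_single x, Finsupp.sum]
  refine Ideal.sum_mem _ fun e he ↦ ?_
  have hsingle : single e (x.coeff e) = single 0 (x.coeff e) * single e 1 := by
    rw [single_mul_single, zero_add, mul_one]
  rw [hsingle]
  exact Ideal.mul_mem_left _ _ (Ideal.subset_span ⟨e, hx e he, rfl⟩)

theorem highDegreeIdeal_le_ker_constantCoeff :
    highDegreeIdeal R σ ≤ RingHom.ker (constantCoeff R : R[σ →₀ ℚ≥0] →ₐ[R] R) := by
  refine Ideal.span_le.mpr ?_
  rintro _ ⟨e, he, rfl⟩
  have he0 : e ≠ 0 := by rintro rfl; simp at he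
  simp [constantCoeff_apply, coeff_single, he0]

theorem le_degree_of_mem_support_pow {x : R[σ →₀ ℚ≥0]} {d : ℚ≥0}
    (hd : ∀ e ∈ x.coeff.support, d ≤ e.degree) (k : ℕ) {e : σ →₀ ℚ≥0}
    (he : e ∈ (x ^ k).coeff.support) : k * d ≤ e.degree := by
  have hpow := le_inf_support_pow (degt := fun e : σ →₀ ℚ≥0 ↦ (e.degree : WithTop ℚ≥0))
    (by simp) (fun a b ↦ by simp) k x
  have hx : (d : WithTop ℚ≥0) ≤ x.coeff.support.inf fun e ↦ (e.degree : WithTop ℚ≥0) :=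
    Finset.le_inf fun e he ↦ WithTop.coe_le_coe.mpr (hd e he)
  have := (nsmul_le_nsmul_right hx k).trans (hpow.trans (Finset.inf_le he))
  rwa [← WithTop.coe_nsmul, WithTop.coe_le_coe, nsmul_eq_mul] at this

theorem exists_pow_mem_highDegreeIdeal {x : R[σ →₀ ℚ≥0]} (hx : x.coeff 0 = 0) :
    ∃ k : ℕ, x ^ k ∈ highDegreeIdeal R σ := by
  obtain ⟨d, hd0, hd⟩ : ∃ d : ℚ≥0, 0 < d ∧ ∀ e ∈ x.coeff.support, d ≤ e.degree := by
    by_cases hs : x.coeff.support.Nonempty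
    · refine ⟨x.coeff.support.inf' hs degree, (Finset.lt_inf'_iff hs).mpr fun e he ↦ ?_,
        fun e he ↦ Finset.inf'_le _ he⟩
      have he0 : e ≠ 0 := by rintro rfl; exact mem_support_iff.mp he hx
      exact pos_iff_ne_zero.mpr ((degree_eq_zero_iff e).not.mpr he0)
    · exact ⟨1, one_pos, by simp [Finset.not_nonempty_iff_eq_empty.mp hs]⟩
  obtain ⟨k, hk⟩ := exists_nat_gt d⁻¹
  refine ⟨k, mem_highDegreeIdeal_of_forall_one_lt_degree fun e he ↦ ?_⟩
  calc 1 < k * d := (inv_lt_iff_one_lt_mul₀ hd0).mp hk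
    _ ≤ e.degree := le_degree_of_mem_support_pow hd k he

end HighDegreeIdeal

section Quotient

variable {R σ : Type*} [CommRing R]

noncomputable def quotientConstantCoeff : R[σ →₀ ℚ≥0] ⧸ highDegreeIdeal R σ →ₐ[R] R :=
  Ideal.Quotient.liftₐ _ (constantCoeff R) fun _ ha ↦
    RingHom.mem_ker.mp (highDegreeIdeal_le_ker_constantCoeff ha)

theorem quotientConstantCoeff_mk (x : R[σ →₀ ℚ≥0]) :
    quotientConstantCoeff (Ideal.Quotient.mk (highDegreeIdeal R σ) x) = x.coeff 0 :=
  constantCoeff_apply x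

theorem isNilpotent_of_quotientConstantCoeff_eq_zero {a : R[σ →₀ ℚ≥0] ⧸ highDegreeIdeal R σ}
    (ha : quotientConstantCoeff a = 0) : IsNilpotent a := by
  obtain ⟨x, rfl⟩ := Ideal.Quotient.mk_surjective a
  rw [quotientConstantCoeff_mk] at ha
  obtain ⟨k, hk⟩ := exists_pow_mem_highDegreeIdeal ha
  exact ⟨k, by rwa [← map_pow, Ideal.Quotient.eq_zero_iff_mem]⟩

end Quotient

end AddMonoidAlgebra

theorem quotient_nonunits_nilpotent_general (F : Type*) [Field F] (p : ℕ) [Fact p.Prime] :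
    let T := AddMonoidAlgebra F (ℕ →₀ ℚ≥0)
    let I : Ideal T := Ideal.span
      {m : T | ∃ e : ℕ →₀ ℚ≥0, 1 < e.sum (fun _ v => v) ∧ m = AddMonoidAlgebra.single e (1 : F)}
    (∀ a : T ⧸ I, ¬IsUnit a → ∃ N : ℕ, a ^ p ^ N = 0) ∧
      IsLocalRing (T ⧸ I) ∧
      (∀ P : Ideal (T ⧸ I), P.IsPrime → P.IsMaximal) := by
  intro T I
  -- `I` is `highDegreeIdeal F ℕ` by unfolding: `Finsupp.degree e` is `e.sum fun _ v => v`
  have key : ∀ a : T ⧸ I, IsNilpotent a ↔ ¬IsUnit a :=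
    AlgHom.isNilpotent_iff_not_isUnit AddMonoidAlgebra.quotientConstantCoeff fun _ ↦
      AddMonoidAlgebra.isNilpotent_of_quotientConstantCoeff_eq_zero
  obtain ⟨hdim, hlocal⟩ := ((Ring.krullDimLE_zero_and_isLocalRing_tfae (T ⧸ I)).out 2 0).mp key
  refine ⟨fun a ha ↦ mem_pNilradical.mp ?_, hlocal, Ring.krullDimLE_zero_iff.mp hdim⟩
  rw [pNilradical_prime Fact.out]
  exact (key a).mpr ha

theorem quotient_nonunits_nilpotent (F : Type*) [Field F] (p : ℕ) [Fact p.Prime]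
    [CharP F p] [PerfectRing F p] :
    let T := AddMonoidAlgebra F (ℕ →₀ ℚ≥0)
    let I : Ideal T := Ideal.span
      {m : T | ∃ e : ℕ →₀ ℚ≥0, 1 < e.sum (fun _ v => v) ∧ m = AddMonoidAlgebra.single e (1 : F)}
    (∀ a : T ⧸ I, ¬IsUnit a → ∃ N : ℕ, a ^ p ^ N = 0) ∧
      IsLocalRing (T ⧸ I) ∧
      (∀ P : Ideal (T ⧸ I), P.IsPrime → P.IsMaximal) :=
  quotient_nonunits_nilpotent_general F p
end
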